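/- Completeness direction of the spawning automaton construction, in generalized form: for every LTL^FO formula φ (possibly with free variables) and every valuation v, the set {(𝔄̄, w) | (𝔄̄, w, v, 0) ⊨ φ} is contained in L(A_{φ,v}); moreover, the sequence ρ defined by ρ(i) = {ψ ∈ cl(φ) | (𝔄̄, w, v, i) ⊨ ψ} is a well-defined accepting run of A_{φ,v} over (𝔄̄, w). -/

import Mathlib

/-!
LTL^FO: a first-order temporal logic.  One-sorted signatures with function
symbols, uninterpreted predicate symbols (U-operators, interpreted via the
trace) and interpreted predicate symbols (I-operators), terms, formulae,
first-order temporal structures, and the satisfaction relation in which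
quantifiers range over the actions of the current event.
-/

namespace LTLFO

/-- A (one-sorted) signature: function symbols `Func`, uninterpreted predicate
symbols `UPred` and interpreted predicate symbols `IPred`, with their arities. -/
structure Sig : Type 1 where
  Func : Type
  arF : Func → ℕ
  UPred : Type
  arU : UPred → ℕ
  IPred : Type
  arI : IPred → ℕ

/-- Terms over a signature, built from variables (named by naturals) and
function symbols. -/
inductive Tm (s : Sig) : Type where
  | var (x : ℕ) : Tm s
  | func (f : s.Func) (args : Fin (s.arF f) → Tm s) : Tm s

/-- LTL^FO formulae:
`φ ::= ⊤ | p(t⃗) | r(t⃗) | ¬φ | φ∧φ | Xφ | φUφ | ∀(x₁,…,xₙ):p. φ`. -/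
inductive FOForm (s : Sig) : Type where
  | tt : FOForm s
  | uatom (p : s.UPred) (ts : Fin (s.arU p) → Tm s) : FOForm s
  | iatom (r : s.IPred) (ts : Fin (s.arI r) → Tm s) : FOForm s
  | neg (φ : FOForm s) : FOForm s
  | and (φ ψ : FOForm s) : FOForm s
  | next (φ : FOForm s) : FOForm s
  | until_ (φ ψ : FOForm s) : FOForm s
  | forall_ (p : s.UPred) (xs : Fin (s.arU p) → ℕ) (φ : FOForm s) : FOForm s

/-- An action `(p, d⃗)`: a U-operator together with a matching tuple of domain values. -/
abbrev Action (s : Sig) (D : Type) : Type := Σ p : s.UPred, (Fin (s.arU p) → D)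

variable {s : Sig} {D : Type}

/-- Evaluation of a term in a domain `D`, given an interpretation of the function
symbols and a valuation of the variables. -/
def Tm.eval (fI : (f : s.Func) → (Fin (s.arF f) → D) → D) (v : ℕ → D) : Tm s → D
  | .var x => v x
  | .func f a => fI f (fun k => Tm.eval fI v (a k))

/-- Update a valuation `v` by binding the variables `xs k` to the values `d k`
(i.e. `v ∪ {x₁ ↦ d₁, …, xₙ ↦ dₙ}`). -/
def updVec {n : ℕ} (v : ℕ → D) (xs : Fin n → ℕ) (d : Fin n → D) : ℕ → D :=
  fun x =>
    match (List.finRange n).find? (fun k => xs k == x) with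
    | some k => d k
    | none => v x

/-- An (infinite) first-order temporal structure `(𝔄̄, w)` over a fixed domain `D`:
a rigid interpretation of the function symbols, a per-position interpretation of
the I-operators, and a trace of events (finite sets of actions). -/
structure TStruct (s : Sig) (D : Type) : Type where
  funcI : (f : s.Func) → (Fin (s.arF f) → D) → D
  predI : ℕ → (r : s.IPred) → (Fin (s.arI r) → D) → Prop
  trace : ℕ → Set (Action s D)
  finEv : ∀ i, (trace i).Finite

/-- The satisfaction relation `(𝔄̄, w, v, i) ⊨ φ` (infinite-trace semantics).
Quantifiers range over the actions of the current event. -/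
def Sat (M : TStruct s D) : FOForm s → (ℕ → D) → ℕ → Prop
  | .tt, _, _ => True
  | .uatom p ts, v, i => (⟨p, fun k => Tm.eval M.funcI v (ts k)⟩ : Action s D) ∈ M.trace i
  | .iatom r ts, v, i => M.predI i r (fun k => Tm.eval M.funcI v (ts k))
  | .neg φ, v, i => ¬ Sat M φ v i
  | .and φ ψ, v, i => Sat M φ v i ∧ Sat M ψ v i
  | .next φ, v, i => Sat M φ v (i + 1)
  | .until_ φ ψ, v, i => ∃ k, i ≤ k ∧ Sat M ψ v k ∧ ∀ j, i ≤ j → j < k → Sat M φ v j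
  | .forall_ p xs φ, v, i =>
      ∀ d : Fin (s.arU p) → D, (⟨p, d⟩ : Action s D) ∈ M.trace i → Sat M φ (updVec v xs d) i

/-- The variables occurring in a term. -/
def Tm.vars : Tm s → Set ℕ
  | .var x => {x}
  | .func _ a => ⋃ k, Tm.vars (a k)

/-- The free variables of a formula. -/
def FOForm.fv : FOForm s → Set ℕ
  | .tt => ∅
  | .uatom _ ts => ⋃ k, Tm.vars (ts k)
  | .iatom _ ts => ⋃ k, Tm.vars (ts k)
  | .neg φ => FOForm.fv φ
  | .and φ ψ => FOForm.fv φ ∪ FOForm.fv ψ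
  | .next φ => FOForm.fv φ
  | .until_ φ ψ => FOForm.fv φ ∪ FOForm.fv ψ
  | .forall_ _ xs φ => FOForm.fv φ \ Set.range xs

/-- A sentence is a formula without free variables. -/
def FOForm.Closed (φ : FOForm s) : Prop := FOForm.fv φ = ∅

/-- An LTL^FO sentence is satisfiable iff some first-order temporal structure
(over some nonempty domain) satisfies it at position 0. -/
def FOSatisfiable (s : Sig) (φ : FOForm s) : Prop :=
  ∃ (D : Type) (_ : Nonempty D) (M : TStruct s D) (v : ℕ → D), Sat M φ v 0

end LTLFO

namespace LTLFO

variable {s : Sig} {D : Type}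

/-- The quantifier depth of a formula (the level of its spawning automaton). -/
def depthFO : FOForm s → ℕ
  | .tt => 0
  | .uatom _ _ => 0
  | .iatom _ _ => 0
  | .neg φ => depthFO φ
  | .and φ ψ => max (depthFO φ) (depthFO ψ)
  | .next φ => depthFO φ
  | .until_ φ ψ => max (depthFO φ) (depthFO ψ)
  | .forall_ _ _ φ => depthFO φ + 1

/-- The restricted subformula function `sf|∀`, treating quantified subformulae as
atomic. -/
def sfA : FOForm s → Set (FOForm s)
  | .tt => {.tt}
  | .uatom p ts => {.uatom p ts}
  | .iatom r ts => {.iatom r ts}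
  | .neg φ => insert (.neg φ) (sfA φ)
  | .and φ ψ => insert (.and φ ψ) (sfA φ ∪ sfA ψ)
  | .next φ => insert (.next φ) (sfA φ)
  | .until_ φ ψ => insert (.until_ φ ψ) (sfA φ ∪ sfA ψ)
  | .forall_ p xs φ => {.forall_ p xs φ}

/-- The closure `cl(φ)`: the smallest set containing `sf|∀(φ)` closed under negation. -/
def cl (φ : FOForm s) : Set (FOForm s) := sfA φ ∪ (FOForm.neg '' sfA φ)

/-- A complete subset of `cl(φ)` (a state of the spawning automaton `A_φ`). -/
def Complete (φ : FOForm s) (q : Set (FOForm s)) : Prop :=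
  q ⊆ cl φ ∧
  (∀ ψ ∈ sfA φ, (ψ ∈ q ∨ FOForm.neg ψ ∈ q) ∧ ¬ (ψ ∈ q ∧ FOForm.neg ψ ∈ q)) ∧
  (∀ ψ ψ', FOForm.and ψ ψ' ∈ cl φ → (FOForm.and ψ ψ' ∈ q ↔ (ψ ∈ q ∧ ψ' ∈ q))) ∧
  (∀ ψ ψ', FOForm.until_ ψ ψ' ∈ cl φ →
    ((FOForm.until_ ψ ψ' ∈ q → (ψ' ∈ q ∨ ψ ∈ q)) ∧
      (FOForm.until_ ψ ψ' ∉ q → ψ' ∉ q)))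

/-- Definedness condition of `δ→` at a state `q` on the `i`-th input `(𝔄ᵢ, wᵢ)`:
all (possibly negated) atomic formulae of `q` are (respectively not) true there. -/
def AtomsOK (M : TStruct s D) (v : ℕ → D) (i : ℕ) (q : Set (FOForm s)) : Prop :=
  (FOForm.neg FOForm.tt ∉ q) ∧
  (∀ p ts, FOForm.uatom p ts ∈ q →
    (⟨p, fun k => Tm.eval M.funcI v (ts k)⟩ : Action s D) ∈ M.trace i) ∧
  (∀ p ts, FOForm.neg (FOForm.uatom p ts) ∈ q →
    (⟨p, fun k => Tm.eval M.funcI v (ts k)⟩ : Action s D) ∉ M.trace i) ∧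
  (∀ r ts, FOForm.iatom r ts ∈ q → M.predI i r (fun k => Tm.eval M.funcI v (ts k))) ∧
  (∀ r ts, FOForm.neg (FOForm.iatom r ts) ∈ q →
    ¬ M.predI i r (fun k => Tm.eval M.funcI v (ts k)))

/-- The transition relation `q' ∈ δ→(q, (𝔄ᵢ, wᵢ))` of `A_{φ,v}`. -/
def Step (φ : FOForm s) (M : TStruct s D) (v : ℕ → D) (i : ℕ)
    (q q' : Set (FOForm s)) : Prop :=
  AtomsOK M v i q ∧
  (∀ ψ, FOForm.next ψ ∈ cl φ → (FOForm.next ψ ∈ q ↔ ψ ∈ q')) ∧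
  (∀ ψ ψ', FOForm.until_ ψ ψ' ∈ cl φ →
    (FOForm.until_ ψ ψ' ∈ q ↔ (ψ' ∈ q ∨ (ψ ∈ q ∧ FOForm.until_ ψ ψ' ∈ q'))))

/-- A run of `A_{φ,v}` over `(𝔄̄, w)`: a sequence of complete states starting in an
initial state (one containing `φ`) and respecting `δ→`. -/
def IsRun (φ : FOForm s) (M : TStruct s D) (v : ℕ → D) (ρ : ℕ → Set (FOForm s)) : Prop :=
  (∀ i, Complete φ (ρ i)) ∧ φ ∈ ρ 0 ∧ ∀ i, Step φ M v i (ρ i) (ρ (i + 1))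

/-- Local (generalized Büchi) acceptance: for each `ψUψ' ∈ cl(φ)`, the set
`F_{ψUψ'} = {q | ψ' ∈ q ∨ ¬(ψUψ') ∈ q}` is visited infinitely often. -/
def LocallyAccepting (φ : FOForm s) (ρ : ℕ → Set (FOForm s)) : Prop :=
  ∀ ψ ψ', FOForm.until_ ψ ψ' ∈ cl φ →
    ∀ N, ∃ i, N ≤ i ∧ (ψ' ∈ ρ i ∨ FOForm.neg (FOForm.until_ ψ ψ') ∈ ρ i)

/-- The suffix `(𝔄̄ⁱ, wⁱ)` of a first-order temporal structure. -/
def TStruct.shift (M : TStruct s D) (i : ℕ) : TStruct s D where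
  funcI := M.funcI
  predI := fun j => M.predI (i + j)
  trace := fun j => M.trace (i + j)
  finEv := fun j => M.finEv (i + j)

/-- Acceptance for spawning automata `A_{φ,v}` of level at most `n`, by recursion on
the level: a run is accepting if it is a locally accepting run and, at every position
`i`, the spawning obligation `δ↓(ρ(i), (𝔄ᵢ, wᵢ))` is satisfiable by a set of spawned
automata all of which have an accepting run over the suffix `(𝔄̄ⁱ, wⁱ)`:
for every `∀x⃗:p.ψ ∈ ρ(i)` and every action `(p, d⃗) ∈ wᵢ` the automaton
`A_{ψ, v∪{x⃗↦d⃗}}` must accept, and for every `¬∀x⃗:p.ψ ∈ ρ(i)` some action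
`(p, d⃗) ∈ wᵢ` must give an accepting `A_{¬ψ, v∪{x⃗↦d⃗}}`.  (At level `0` the
spawning function is constantly `⊤`.) -/
def AcceptingAux : ℕ → TStruct s D → FOForm s → (ℕ → D) → (ℕ → Set (FOForm s)) → Prop
  | 0, M, φ, v, ρ => IsRun φ M v ρ ∧ LocallyAccepting φ ρ
  | n + 1, M, φ, v, ρ =>
      IsRun φ M v ρ ∧ LocallyAccepting φ ρ ∧
      ∀ i : ℕ,
        (∀ p xs ψ, FOForm.forall_ p xs ψ ∈ ρ i →
          ∀ d : Fin (s.arU p) → D, (⟨p, d⟩ : Action s D) ∈ M.trace i →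
            ∃ ρ', AcceptingAux n (M.shift i) ψ (updVec v xs d) ρ') ∧
        (∀ p xs ψ, FOForm.neg (FOForm.forall_ p xs ψ) ∈ ρ i →
          ∃ d : Fin (s.arU p) → D, (⟨p, d⟩ : Action s D) ∈ M.trace i ∧
            ∃ ρ', AcceptingAux n (M.shift i) (FOForm.neg ψ) (updVec v xs d) ρ')

/-- `ρ` is an accepting run of the spawning automaton `A_{φ,v}` (whose level is the
quantifier depth of `φ`) over the first-order temporal structure `M = (𝔄̄, w)`. -/
def Accepting (M : TStruct s D) (φ : FOForm s) (v : ℕ → D)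
    (ρ : ℕ → Set (FOForm s)) : Prop :=
  AcceptingAux (depthFO φ) M φ v ρ

end LTLFO


/-! The canonical run records at each position which formulae of `cl φ` hold there. The
conditions on states and transitions of `A_{φ,v}` are exactly the one-step semantics of
the connectives, with `ψ U ψ'` unfolded by the expansion law
`ψ U ψ' ≡ ψ' ∨ (ψ ∧ X(ψ U ψ'))`; an until formula that holds is eventually fulfilled, which
gives the Büchi condition. Quantified subformulae are atomic for the automaton; their
obligations are met by the canonical runs of the spawned automata over the suffix, by
induction on the level. -/

namespace LTLFO

variable {s : Sig} {D : Type}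

theorem mem_sfA_self (φ : FOForm s) : φ ∈ sfA φ := by
  cases φ <;> simp [sfA]

theorem sfA_subset_of_mem {χ θ : FOForm s} (h : θ ∈ sfA χ) : sfA θ ⊆ sfA χ := by
  induction χ with
  | tt | uatom | iatom | forall_ =>
    simp only [sfA, Set.mem_singleton_iff] at h
    exact h ▸ subset_rfl
  | neg φ ih | next φ ih =>
    rcases h with rfl | h
    · exact subset_rfl
    · exact (ih h).trans (Set.subset_insert _ _)
  | and φ ψ ih₁ ih₂ | until_ φ ψ ih₁ ih₂ =>
    rcases h with rfl | h | h
    · exact subset_rfl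
    · exact (ih₁ h).trans (Set.subset_union_left.trans (Set.subset_insert _ _))
    · exact (ih₂ h).trans (Set.subset_union_right.trans (Set.subset_insert _ _))

theorem mem_cl_of_mem_sfA {φ ψ : FOForm s} (h : ψ ∈ sfA φ) : ψ ∈ cl φ :=
  Or.inl h

theorem neg_mem_cl_of_mem_sfA {φ ψ : FOForm s} (h : ψ ∈ sfA φ) : FOForm.neg ψ ∈ cl φ :=
  Or.inr ⟨ψ, h, rfl⟩

theorem mem_cl_self (φ : FOForm s) : φ ∈ cl φ :=
  mem_cl_of_mem_sfA (mem_sfA_self φ)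

theorem mem_sfA_of_mem_cl {φ χ : FOForm s} (h : χ ∈ cl φ) (hχ : ∀ θ, χ ≠ FOForm.neg θ) :
    χ ∈ sfA φ := by
  rcases h with h | ⟨θ, -, rfl⟩
  exacts [h, absurd rfl (hχ θ)]

theorem mem_cl_of_mem_sfA_of_mem_cl {φ χ θ : FOForm s} (hχ : χ ∈ cl φ)
    (hneg : ∀ ϑ, χ ≠ FOForm.neg ϑ) (hθ : θ ∈ sfA χ) : θ ∈ cl φ :=
  mem_cl_of_mem_sfA (sfA_subset_of_mem (mem_sfA_of_mem_cl hχ hneg) hθ)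

theorem mem_cl_of_and_mem_cl {φ ψ ψ' : FOForm s} (h : FOForm.and ψ ψ' ∈ cl φ) :
    ψ ∈ cl φ ∧ ψ' ∈ cl φ :=
  ⟨mem_cl_of_mem_sfA_of_mem_cl h (by simp) (by simp [sfA, mem_sfA_self]),
    mem_cl_of_mem_sfA_of_mem_cl h (by simp) (by simp [sfA, mem_sfA_self])⟩

theorem mem_cl_of_until_mem_cl {φ ψ ψ' : FOForm s} (h : FOForm.until_ ψ ψ' ∈ cl φ) :
    ψ ∈ cl φ ∧ ψ' ∈ cl φ :=
  ⟨mem_cl_of_mem_sfA_of_mem_cl h (by simp) (by simp [sfA, mem_sfA_self]),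
    mem_cl_of_mem_sfA_of_mem_cl h (by simp) (by simp [sfA, mem_sfA_self])⟩

theorem mem_cl_of_next_mem_cl {φ ψ : FOForm s} (h : FOForm.next ψ ∈ cl φ) : ψ ∈ cl φ :=
  mem_cl_of_mem_sfA_of_mem_cl h (by simp) (by simp [sfA, mem_sfA_self])

theorem sat_neg {M : TStruct s D} {ψ : FOForm s} {v : ℕ → D} {i : ℕ} :
    Sat M (FOForm.neg ψ) v i ↔ ¬ Sat M ψ v i := Iff.rfl

theorem sat_until_iff {M : TStruct s D} {ψ ψ' : FOForm s} {v : ℕ → D} {i : ℕ} :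
    Sat M (FOForm.until_ ψ ψ') v i ↔
      Sat M ψ' v i ∨ (Sat M ψ v i ∧ Sat M (FOForm.until_ ψ ψ') v (i + 1)) := by
  constructor
  · rintro ⟨k, hik, hk, hbefore⟩
    rcases hik.eq_or_lt with rfl | hlt
    · exact Or.inl hk
    · exact Or.inr ⟨hbefore i le_rfl hlt, k, hlt, hk, fun j hj => hbefore j (by omega)⟩
  · rintro (h | ⟨h, k, hik, hk, hbefore⟩)
    · exact ⟨i, le_rfl, h, fun j hij hji => absurd hji (not_lt.mpr hij)⟩
    · refine ⟨k, by omega, hk, fun j hij hjk => ?_⟩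
      rcases hij.eq_or_lt with rfl | hlt
      exacts [h, hbefore j hlt hjk]

theorem sat_shift (M : TStruct s D) (i : ℕ) (ψ : FOForm s) (v : ℕ → D) (j : ℕ) :
    Sat (M.shift i) ψ v j ↔ Sat M ψ v (i + j) := by
  induction ψ generalizing v j with
  | tt | uatom | iatom => rfl
  | neg φ ih => exact not_congr (ih v j)
  | and φ ψ ih₁ ih₂ => exact and_congr (ih₁ v j) (ih₂ v j)
  | next φ ih => exact ih v (j + 1)
  | forall_ p xs φ ih => exact forall_congr' fun d => imp_congr Iff.rfl (ih _ j)
  | until_ φ ψ ih₁ ih₂ =>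
    constructor
    · rintro ⟨k, hjk, hk, hbefore⟩
      refine ⟨i + k, by omega, (ih₂ v k).mp hk, fun m him hmk => ?_⟩
      have := (ih₁ v (m - i)).mp (hbefore (m - i) (by omega) (by omega))
      rwa [Nat.add_sub_cancel' (by omega)] at this
    · rintro ⟨k, hik, hk, hbefore⟩
      refine ⟨k - i, by omega, ?_, fun m hjm hmk =>
        (ih₁ v m).mpr (hbefore (i + m) (by omega) (by omega))⟩
      rwa [ih₂, Nat.add_sub_cancel' (by omega)]

section SatRun

def satRun (M : TStruct s D) (φ : FOForm s) (v : ℕ → D) (i : ℕ) : Set (FOForm s) :=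
  {ψ | ψ ∈ cl φ ∧ Sat M ψ v i}

variable {M : TStruct s D} {φ : FOForm s} {v : ℕ → D}

theorem mem_satRun_iff {ψ : FOForm s} {i : ℕ} (h : ψ ∈ cl φ) :
    ψ ∈ satRun M φ v i ↔ Sat M ψ v i :=
  and_iff_right h

theorem complete_satRun (i : ℕ) : Complete φ (satRun M φ v i) := by
  refine ⟨fun ψ h => h.1, fun ψ hψ => ?_, fun ψ ψ' h => ?_, fun ψ ψ' h => ?_⟩
  · rw [mem_satRun_iff (mem_cl_of_mem_sfA hψ), mem_satRun_iff (neg_mem_cl_of_mem_sfA hψ), sat_neg]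
    tauto
  · obtain ⟨hψ, hψ'⟩ := mem_cl_of_and_mem_cl h
    rw [mem_satRun_iff h, mem_satRun_iff hψ, mem_satRun_iff hψ']
    rfl
  · obtain ⟨hψ, hψ'⟩ := mem_cl_of_until_mem_cl h
    rw [mem_satRun_iff h, mem_satRun_iff hψ, mem_satRun_iff hψ', sat_until_iff]
    tauto

theorem atomsOK_satRun (i : ℕ) : AtomsOK M v i (satRun M φ v i) :=
  ⟨fun h => h.2 trivial, fun _ _ h => h.2, fun _ _ h => h.2, fun _ _ h => h.2,
    fun _ _ h => h.2⟩

theorem step_satRun (i : ℕ) : Step φ M v i (satRun M φ v i) (satRun M φ v (i + 1)) := by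
  refine ⟨atomsOK_satRun i, fun ψ h => ?_, fun ψ ψ' h => ?_⟩
  · rw [mem_satRun_iff h, mem_satRun_iff (mem_cl_of_next_mem_cl h)]
    rfl
  · obtain ⟨hψ, hψ'⟩ := mem_cl_of_until_mem_cl h
    rw [mem_satRun_iff h, mem_satRun_iff h, mem_satRun_iff hψ, mem_satRun_iff hψ']
    exact sat_until_iff

theorem isRun_satRun (h : Sat M φ v 0) : IsRun φ M v (satRun M φ v) :=
  ⟨complete_satRun, ⟨mem_cl_self φ, h⟩, step_satRun⟩

theorem locallyAccepting_satRun : LocallyAccepting φ (satRun M φ v) := by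
  intro ψ ψ' h N
  by_cases hN : Sat M (FOForm.until_ ψ ψ') v N
  · obtain ⟨k, hNk, hk, -⟩ := hN
    exact ⟨k, hNk, Or.inl ⟨(mem_cl_of_until_mem_cl h).2, hk⟩⟩
  · have hU := mem_sfA_of_mem_cl h (by simp)
    exact ⟨N, le_rfl, Or.inr ⟨neg_mem_cl_of_mem_sfA hU, hN⟩⟩

end SatRun

theorem acceptingAux_satRun (n : ℕ) {M : TStruct s D} {φ : FOForm s} {v : ℕ → D}
    (h : Sat M φ v 0) : AcceptingAux n M φ v (satRun M φ v) := by
  induction n generalizing M φ v with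
  | zero => exact ⟨isRun_satRun h, locallyAccepting_satRun⟩
  | succ n ih =>
    refine ⟨isRun_satRun h, locallyAccepting_satRun, fun i => ⟨?_, ?_⟩⟩
    · rintro p xs ψ ⟨-, hall⟩ d hd
      exact ⟨_, ih ((sat_shift M i ψ _ 0).mpr (hall d hd))⟩
    · rintro p xs ψ ⟨-, hex⟩
      obtain ⟨d, hd, hψ⟩ :
          ∃ d, (⟨p, d⟩ : Action s D) ∈ M.trace i ∧ ¬ Sat M ψ (updVec v xs d) i := by
        simpa [Sat] using hex
      exact ⟨d, hd, _, ih ((sat_shift M i ψ.neg _ 0).mpr hψ)⟩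

/-- Completeness of the spawning automaton construction, in
generalized form: for every LTL^FO formula `φ` (possibly with free variables) and
every valuation `v`, the set `{(𝔄̄, w) | (𝔄̄, w, v, 0) ⊨ φ}` is contained in
`L(A_{φ,v})`; moreover, for every `(𝔄̄, w)` satisfying `φ`, the sequence
`ρ(i) = {ψ ∈ cl(φ) | (𝔄̄, w, v, i) ⊨ ψ}` is a well-defined accepting run of
`A_{φ,v}` over `(𝔄̄, w)`. -/
theorem spawning_automaton_complete {s : Sig} {D : Type}
    (φ : FOForm s) (v : ℕ → D) :
    ({M : TStruct s D | Sat M φ v 0} ⊆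
        {M : TStruct s D | ∃ ρ : ℕ → Set (FOForm s), Accepting M φ v ρ}) ∧
      ∀ M : TStruct s D, Sat M φ v 0 →
        Accepting M φ v (fun i => {ψ | ψ ∈ cl φ ∧ Sat M ψ v i}) :=
  ⟨fun _ hM => ⟨_, acceptingAux_satRun _ hM⟩, fun _ hM => acceptingAux_satRun _ hM⟩

end LTLFO
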